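/- For every integer n ≥ 2 and x ∈ [0,1], with f_n(x) = ∑_{k=3}^n (n+k−2)(n−k+1)·x^{n−k} (empty sum = 0 for n=2), one has f_n(x) ≤ 2(n−1)·min(n(n−2)/3, 1/(1−x)²). Moreover, with g_n(x) = ∑_{k=4}^n (k−3)(n+k−2)(n−k+1)·x^{n−k}, one has g_n(x) ≤ 2(n−1)(n−3)·min(n(n−2)/8, 1/(1−x)²) for n ≥ 4. -/

import Mathlib

/-- Geometric-type identity: `(1-x)² ∑_{j<m} (j+1)xʲ = 1 - (m+1)xᵐ + m xᵐ⁺¹`. -/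
lemma aux_geom_id (x : ℝ) (m : ℕ) :
    (1 - x) ^ 2 * ∑ j ∈ Finset.range m, ((j : ℝ) + 1) * x ^ j
      = 1 - ((m : ℝ) + 1) * x ^ m + (m : ℝ) * x ^ (m + 1) := by
  induction m with
  | zero => simp
  | succ m ih =>
      rw [Finset.sum_range_succ, mul_add, ih]
      push_cast
      ring

lemma aux_geom_bound (x : ℝ) (hx0 : 0 ≤ x) (hx1 : x < 1) (m : ℕ) :
    ∑ j ∈ Finset.range m, ((j : ℝ) + 1) * x ^ j ≤ 1 / (1 - x) ^ 2 := by
  have h2 : (0 : ℝ) < (1 - x) ^ 2 := by nlinarith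
  rw [le_div_iff₀ h2, mul_comm, aux_geom_id]
  have hpow : x ^ (m + 1) ≤ x ^ m := pow_le_pow_of_le_one hx0 (le_of_lt hx1) (Nat.le_succ m)
  have hm0 : (0 : ℝ) ≤ (m : ℝ) := Nat.cast_nonneg m
  have hpm : (0 : ℝ) ≤ x ^ m := pow_nonneg hx0 m
  nlinarith

/-- Reindexing: `∑_{k=a}^{n} (n-k+1) x^{n-k} = ∑_{j<n+1-a} (j+1) xʲ`. -/
lemma aux_reindex (a n : ℕ) (x : ℝ) :
    ∑ k ∈ Finset.Icc a n, ((n : ℝ) - k + 1) * x ^ (n - k)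
      = ∑ j ∈ Finset.range (n + 1 - a), ((j : ℝ) + 1) * x ^ j := by
  rw [← Finset.Ico_add_one_right_eq_Icc, Finset.sum_Ico_eq_sum_range, ← Finset.sum_range_reflect]
  apply Finset.sum_congr rfl
  intro i hi
  simp only [Finset.mem_range] at hi
  have h1 : a + (n + 1 - a - 1 - i) = n - i := by omega
  have h2 : n - (n - i) = i := by omega
  rw [h1, h2]
  have h3 : ((n - i : ℕ) : ℝ) = (n : ℝ) - (i : ℝ) := by
    rw [Nat.cast_sub (by omega : i ≤ n)]
  rw [h3]
  ring

/-- Reindexing a function of `k` over `Icc a n` via `k = n - i`. -/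
lemma aux_reindexS (a n : ℕ) (F : ℝ → ℝ) :
    ∑ k ∈ Finset.Icc a n, F (k : ℝ)
      = ∑ i ∈ Finset.range (n + 1 - a), F ((n : ℝ) - (i : ℝ)) := by
  rw [← Finset.Ico_add_one_right_eq_Icc, Finset.sum_Ico_eq_sum_range, ← Finset.sum_range_reflect]
  apply Finset.sum_congr rfl
  intro i hi
  simp only [Finset.mem_range] at hi
  have h1 : a + (n + 1 - a - 1 - i) = n - i := by omega
  rw [h1]
  congr 1
  rw [Nat.cast_sub (by omega : i ≤ n)]

lemma aux_sum_lin (c : ℝ) (m : ℕ) :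
    ∑ i ∈ Finset.range m, (c - (i : ℝ)) * ((i : ℝ) + 1)
      = c * (m : ℝ) * ((m : ℝ) + 1) / 2 - (m : ℝ) * ((m : ℝ) ^ 2 - 1) / 3 := by
  induction m with
  | zero => simp
  | succ m ih =>
      rw [Finset.sum_range_succ, ih]
      push_cast
      ring

lemma aux_sum_quad (a b : ℝ) (m : ℕ) :
    ∑ i ∈ Finset.range m, (a - (i : ℝ)) * (b - (i : ℝ)) * ((i : ℝ) + 1)
      = a * b * (m : ℝ) * ((m : ℝ) + 1) / 2
        - (a + b) * (m : ℝ) * ((m : ℝ) ^ 2 - 1) / 3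
        + ((m : ℝ) * ((m : ℝ) - 1) / 2) ^ 2
        + (m : ℝ) * ((m : ℝ) - 1) * (2 * (m : ℝ) - 1) / 6 := by
  induction m with
  | zero => norm_num
  | succ m ih =>
      rw [Finset.sum_range_succ, ih]
      push_cast
      ring

/-- Inequalities (27) and (28): bounds for `f_n(x,1)` and `g_n(x,1)`; at
`x = 1` the convention `1/(1−x)² = ∞` makes the corresponding claims
conditional on `x < 1`, while the bounds via the finite first arguments of the
minima hold unconditionally. -/
theorem stmt_19 (n : ℕ) (hn : 2 ≤ n) (x : ℝ) (hx0 : 0 ≤ x) (hx1 : x ≤ 1)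
    (f g : ℝ)
    (hf : f = ∑ k ∈ Finset.Icc 3 n, ((n : ℝ) + k - 2) * ((n : ℝ) - k + 1) * x ^ (n - k))
    (hg : g = ∑ k ∈ Finset.Icc 4 n,
      ((k : ℝ) - 3) * ((n : ℝ) + k - 2) * ((n : ℝ) - k + 1) * x ^ (n - k)) :
    f ≤ 2 * ((n : ℝ) - 1) * ((n : ℝ) * ((n : ℝ) - 2) / 3) ∧
    (x < 1 → f ≤ 2 * ((n : ℝ) - 1) * (1 / (1 - x) ^ 2)) ∧
    (4 ≤ n →
      g ≤ 2 * ((n : ℝ) - 1) * ((n : ℝ) - 3) * ((n : ℝ) * ((n : ℝ) - 2) / 8) ∧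
      (x < 1 → g ≤ 2 * ((n : ℝ) - 1) * ((n : ℝ) - 3) * (1 / (1 - x) ^ 2))) := by
  have hn' : (2 : ℝ) ≤ (n : ℝ) := by exact_mod_cast hn
  refine ⟨?_, ?_, ?_⟩
  · -- f ≤ 2(n-1)·n(n-2)/3
    have h1 : f ≤ ∑ k ∈ Finset.Icc 3 n, ((n : ℝ) + (k : ℝ) - 2) * ((n : ℝ) - (k : ℝ) + 1) := by
      rw [hf]
      apply Finset.sum_le_sum
      intro k hk
      simp only [Finset.mem_Icc] at hk
      have hk1 : (3 : ℝ) ≤ (k : ℝ) := by exact_mod_cast hk.1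
      have hk2 : (k : ℝ) ≤ (n : ℝ) := by exact_mod_cast hk.2
      have hxp : x ^ (n - k) ≤ 1 := pow_le_one₀ hx0 hx1
      have hP : (0 : ℝ) ≤ ((n : ℝ) + (k : ℝ) - 2) * ((n : ℝ) - (k : ℝ) + 1) :=
        mul_nonneg (by linarith) (by linarith)
      nlinarith [mul_le_mul_of_nonneg_left hxp hP]
    have h2 : ∑ k ∈ Finset.Icc 3 n, ((n : ℝ) + (k : ℝ) - 2) * ((n : ℝ) - (k : ℝ) + 1)
        = ∑ i ∈ Finset.range (n + 1 - 3), (2 * (n : ℝ) - 2 - (i : ℝ)) * ((i : ℝ) + 1) := by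
      rw [aux_reindexS 3 n (fun y => ((n : ℝ) + y - 2) * ((n : ℝ) - y + 1))]
      exact Finset.sum_congr rfl fun i _ => by ring
    have hm : ((n + 1 - 3 : ℕ) : ℝ) = (n : ℝ) - 2 := by
      have : n + 1 - 3 = n - 2 := by omega
      rw [this, Nat.cast_sub hn]; norm_num
    rw [h2, aux_sum_lin, hm] at h1
    nlinarith [h1]
  · -- f ≤ 2(n-1)/(1-x)²
    intro hxlt
    have hT : ∑ k ∈ Finset.Icc 3 n, ((n : ℝ) - (k : ℝ) + 1) * x ^ (n - k) ≤ 1 / (1 - x) ^ 2 := by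
      rw [aux_reindex]; exact aux_geom_bound x hx0 hxlt _
    have h1 : f ≤ (2 * (n : ℝ) - 2) *
        ∑ k ∈ Finset.Icc 3 n, ((n : ℝ) - (k : ℝ) + 1) * x ^ (n - k) := by
      rw [hf, Finset.mul_sum]
      apply Finset.sum_le_sum
      intro k hk
      simp only [Finset.mem_Icc] at hk
      have hk2 : (k : ℝ) ≤ (n : ℝ) := by exact_mod_cast hk.2
      have hC : (0 : ℝ) ≤ ((n : ℝ) - (k : ℝ) + 1) * x ^ (n - k) :=
        mul_nonneg (by linarith) (pow_nonneg hx0 _)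
      calc ((n : ℝ) + (k : ℝ) - 2) * ((n : ℝ) - (k : ℝ) + 1) * x ^ (n - k)
          = ((n : ℝ) + (k : ℝ) - 2) * (((n : ℝ) - (k : ℝ) + 1) * x ^ (n - k)) := by ring
        _ ≤ (2 * (n : ℝ) - 2) * (((n : ℝ) - (k : ℝ) + 1) * x ^ (n - k)) :=
            mul_le_mul_of_nonneg_right (by linarith) hC
    have h2 : (2 * (n : ℝ) - 2) *
        (∑ k ∈ Finset.Icc 3 n, ((n : ℝ) - (k : ℝ) + 1) * x ^ (n - k))
        ≤ (2 * (n : ℝ) - 2) * (1 / (1 - x) ^ 2) :=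
      mul_le_mul_of_nonneg_left hT (by linarith)
    have h3 : (2 * (n : ℝ) - 2) * (1 / (1 - x) ^ 2)
        = 2 * ((n : ℝ) - 1) * (1 / (1 - x) ^ 2) := by ring
    linarith
  · intro hn4
    have hn4' : (4 : ℝ) ≤ (n : ℝ) := by exact_mod_cast hn4
    constructor
    · -- g ≤ 2(n-1)(n-3)·n(n-2)/8
      have h1 : g ≤ ∑ k ∈ Finset.Icc 4 n,
          ((k : ℝ) - 3) * ((n : ℝ) + (k : ℝ) - 2) * ((n : ℝ) - (k : ℝ) + 1) := by
        rw [hg]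
        apply Finset.sum_le_sum
        intro k hk
        simp only [Finset.mem_Icc] at hk
        have hk1 : (4 : ℝ) ≤ (k : ℝ) := by exact_mod_cast hk.1
        have hk2 : (k : ℝ) ≤ (n : ℝ) := by exact_mod_cast hk.2
        have hxp : x ^ (n - k) ≤ 1 := pow_le_one₀ hx0 hx1
        have hP : (0 : ℝ) ≤ ((k:ℝ) - 3) * ((n:ℝ) + (k:ℝ) - 2) * ((n:ℝ) - (k:ℝ) + 1) :=
          mul_nonneg (mul_nonneg (by linarith) (by linarith)) (by linarith)
        nlinarith [mul_le_mul_of_nonneg_left hxp hP]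
      have h2 : ∑ k ∈ Finset.Icc 4 n,
          ((k : ℝ) - 3) * ((n : ℝ) + (k : ℝ) - 2) * ((n : ℝ) - (k : ℝ) + 1)
          = ∑ i ∈ Finset.range (n + 1 - 4),
            (((n : ℝ) - 3) - (i : ℝ)) * ((2 * (n : ℝ) - 2) - (i : ℝ)) * ((i : ℝ) + 1) := by
        rw [aux_reindexS 4 n
          (fun y => (y - 3) * ((n : ℝ) + y - 2) * ((n : ℝ) - y + 1))]
        exact Finset.sum_congr rfl fun i _ => by ring
      have hm : ((n + 1 - 4 : ℕ) : ℝ) = (n : ℝ) - 3 := by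
        have h : n + 1 - 4 = n - 3 := by omega
        rw [h, Nat.cast_sub (by omega : 3 ≤ n)]; norm_num
      rw [h2, aux_sum_quad, hm] at h1
      nlinarith [h1]
    · -- g ≤ 2(n-1)(n-3)/(1-x)²
      intro hxlt
      have hT : ∑ k ∈ Finset.Icc 4 n, ((n : ℝ) - (k : ℝ) + 1) * x ^ (n - k)
          ≤ 1 / (1 - x) ^ 2 := by
        rw [aux_reindex]; exact aux_geom_bound x hx0 hxlt _
      have h1 : g ≤ (((n : ℝ) - 3) * (2 * (n : ℝ) - 2)) *
          ∑ k ∈ Finset.Icc 4 n, ((n : ℝ) - (k : ℝ) + 1) * x ^ (n - k) := by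
        rw [hg, Finset.mul_sum]
        apply Finset.sum_le_sum
        intro k hk
        simp only [Finset.mem_Icc] at hk
        have hk1 : (4 : ℝ) ≤ (k : ℝ) := by exact_mod_cast hk.1
        have hk2 : (k : ℝ) ≤ (n : ℝ) := by exact_mod_cast hk.2
        have hC : (0 : ℝ) ≤ ((n : ℝ) - (k : ℝ) + 1) * x ^ (n - k) :=
          mul_nonneg (by linarith) (pow_nonneg hx0 _)
        have hAB : ((k : ℝ) - 3) * ((n : ℝ) + (k : ℝ) - 2)
            ≤ ((n : ℝ) - 3) * (2 * (n : ℝ) - 2) :=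
          mul_le_mul (by linarith) (by linarith) (by linarith) (by linarith)
        calc ((k : ℝ) - 3) * ((n : ℝ) + (k : ℝ) - 2) * ((n : ℝ) - (k : ℝ) + 1) * x ^ (n - k)
            = (((k : ℝ) - 3) * ((n : ℝ) + (k : ℝ) - 2)) *
              (((n : ℝ) - (k : ℝ) + 1) * x ^ (n - k)) := by ring
          _ ≤ (((n : ℝ) - 3) * (2 * (n : ℝ) - 2)) *
              (((n : ℝ) - (k : ℝ) + 1) * x ^ (n - k)) :=
            mul_le_mul_of_nonneg_right hAB hC
      have h2 : (((n : ℝ) - 3) * (2 * (n : ℝ) - 2)) *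
          (∑ k ∈ Finset.Icc 4 n, ((n : ℝ) - (k : ℝ) + 1) * x ^ (n - k))
          ≤ (((n : ℝ) - 3) * (2 * (n : ℝ) - 2)) * (1 / (1 - x) ^ 2) :=
        mul_le_mul_of_nonneg_left hT (by nlinarith)
      have h3 : (((n : ℝ) - 3) * (2 * (n : ℝ) - 2)) * (1 / (1 - x) ^ 2)
          = 2 * ((n : ℝ) - 1) * ((n : ℝ) - 3) * (1 / (1 - x) ^ 2) := by ring
      linarith
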